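/- arXiv:1911.12336 — 3 statements merged into one kernel-verified Lean document; each statement's English description precedes it below -/
import Mathlib

section
/- For all real x with 0 ≤ δ ≤ 1, if |cos(x) - cos(x)²| ≥ 2 - δ, then |sin(x)| ≤ (1/√2)·√(√(9-4δ) - 3 + 2δ). -/
open Real

theorem stmt0 (δ x : ℝ) (hδ0 : 0 ≤ δ) (hδ1 : δ ≤ 1)
    (h : |Real.cos x - (Real.cos x) ^ 2| ≥ 2 - δ) :
    |Real.sin x| ≤ (1 / Real.sqrt 2) * Real.sqrt (Real.sqrt (9 - 4 * δ) - 3 + 2 * δ) := by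
  set c := Real.cos x with hc
  set r := Real.sqrt (9 - 4 * δ) with hrdef
  have hr0 : 0 ≤ r := Real.sqrt_nonneg _
  have hr2 : r ^ 2 = 9 - 4 * δ := Real.sq_sqrt (by linarith)
  have hrge : r ≥ 2 := by nlinarith
  have hc1 : c ≤ 1 := Real.cos_le_one x
  have hcm1 : -1 ≤ c := Real.neg_one_le_cos x
  -- c - c^2 ≤ 1/4 < 2 - δ, so must be c^2 - c ≥ 2 - δ
  have hcase : c ^ 2 - c ≥ 2 - δ := by
    rcases abs_cases (c - c ^ 2) with ⟨he, _⟩ | ⟨he, _⟩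
    · nlinarith [sq_nonneg (2 * c - 1), h.le, h]
    · rw [he] at h; linarith [h]
  have hkey : 2 * c - 1 ≤ -r := by
    nlinarith [sq_nonneg (2 * c - 1)]
  have hsin : Real.sin x ^ 2 ≤ (r - 3 + 2 * δ) / 2 := by
    have := Real.sin_sq_add_cos_sq x
    nlinarith [hkey, hr2]
  have hrewrite : (1 / Real.sqrt 2) * Real.sqrt (r - 3 + 2 * δ)
      = Real.sqrt ((r - 3 + 2 * δ) / 2) := by
    rw [div_eq_mul_inv (r - 3 + 2 * δ) 2, Real.sqrt_mul' _ (by positivity),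
      Real.sqrt_inv]
    ring
  rw [hrewrite, ← Real.sqrt_sq_eq_abs]
  exact Real.sqrt_le_sqrt hsin
end

section
/- If θ is a critical point of f and r = ‖r‖ e^{iθ_r} ≠ 0 is the Kuramoto order parameter, then for each i, |sin(θᵢ - θ_r)| ≤ (1/‖r‖)·|Σ_{j≠i} (1 - a_{ij}) sin(θᵢ - θⱼ)|. -/
open Complex Finset

theorem stmt5 (n : ℕ) (a : Fin n → Fin n → ℝ)
    (h01 : ∀ i j, a i j = 0 ∨ a i j = 1)
    (hsymm : ∀ i j, a i j = a j i) (hdiag : ∀ i, a i i = 0)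
    (θ : Fin n → ℝ)
    (hcrit : fderiv ℝ (fun φ : Fin n → ℝ =>
      ∑ i : Fin n, ∑ j : Fin n, a i j * Real.cos (φ i - φ j)) θ = 0)
    (r : ℂ) (hr : r = ∑ j : Fin n, Complex.exp (θ j * Complex.I))
    (θr : ℝ) (hpolar : r = (‖r‖ : ℂ) * Complex.exp (θr * Complex.I))
    (hrpos : 0 < ‖r‖) :
    ∀ i : Fin n,
      |Real.sin (θ i - θr)| ≤
        (1 / ‖r‖) *
          |∑ j ∈ Finset.univ.erase i, (1 - a i j) * Real.sin (θ i - θ j)| := by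
  intro i
  -- the explicit total derivative
  have hL : ∀ k j : Fin n, HasFDerivAt (fun φ : Fin n → ℝ => a k j * Real.cos (φ k - φ j))
      ((a k j * (-Real.sin (θ k - θ j))) •
        ((ContinuousLinearMap.proj k : (Fin n → ℝ) →L[ℝ] ℝ) - ContinuousLinearMap.proj j)) θ := by
    intro k j
    have h1 : HasFDerivAt (fun φ : Fin n → ℝ => φ k - φ j)
        ((ContinuousLinearMap.proj k : (Fin n → ℝ) →L[ℝ] ℝ) - ContinuousLinearMap.proj j) θ :=
      ((ContinuousLinearMap.proj k : (Fin n → ℝ) →L[ℝ] ℝ) - ContinuousLinearMap.proj j).hasFDerivAt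
    have h2 := (Real.hasDerivAt_cos (θ k - θ j)).comp_hasFDerivAt θ h1
    have h3 := h2.const_mul (a k j)
    have h5 : (a k j * (-Real.sin (θ k - θ j))) •
        ((ContinuousLinearMap.proj k : (Fin n → ℝ) →L[ℝ] ℝ) - ContinuousLinearMap.proj j)
        = a k j • ((-Real.sin (θ k - θ j)) •
          ((ContinuousLinearMap.proj k : (Fin n → ℝ) →L[ℝ] ℝ) - ContinuousLinearMap.proj j)) := by
      rw [smul_smul]
    rw [h5]
    exact h3
  have hsum : HasFDerivAt (fun φ : Fin n → ℝ =>
      ∑ k : Fin n, ∑ j : Fin n, a k j * Real.cos (φ k - φ j))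
      (∑ k : Fin n, ∑ j : Fin n, (a k j * (-Real.sin (θ k - θ j))) •
        ((ContinuousLinearMap.proj k : (Fin n → ℝ) →L[ℝ] ℝ) - ContinuousLinearMap.proj j)) θ := by
    apply HasFDerivAt.fun_sum
    intro k _
    exact HasFDerivAt.fun_sum (fun j _ => hL k j)
  have hLzero : (∑ k : Fin n, ∑ j : Fin n, (a k j * (-Real.sin (θ k - θ j))) •
      ((ContinuousLinearMap.proj k : (Fin n → ℝ) →L[ℝ] ℝ) - ContinuousLinearMap.proj j)) = 0 := by
    rw [← hsum.fderiv, hcrit]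
  have happ := DFunLike.congr_fun hLzero (Pi.single i 1 : Fin n → ℝ)
  have hscal : ∑ k : Fin n, ∑ j : Fin n, (a k j * (-Real.sin (θ k - θ j))) *
      ((Pi.single i 1 : Fin n → ℝ) k - (Pi.single i 1 : Fin n → ℝ) j) = 0 := by
    simpa [ContinuousLinearMap.sum_apply, ContinuousLinearMap.smul_apply,
      ContinuousLinearMap.sub_apply, ContinuousLinearMap.proj_apply, smul_eq_mul] using happ
  have hzero : ∑ j : Fin n, a i j * Real.sin (θ i - θ j) = 0 := by
    have h1 : ∑ k : Fin n, ∑ j : Fin n, (a k j * (-Real.sin (θ k - θ j))) *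
        ((Pi.single i 1 : Fin n → ℝ) k - (Pi.single i 1 : Fin n → ℝ) j)
        = -(2 * ∑ j : Fin n, a i j * Real.sin (θ i - θ j)) := by
      have expand : ∀ k j : Fin n, (a k j * (-Real.sin (θ k - θ j))) *
          ((Pi.single i 1 : Fin n → ℝ) k - (Pi.single i 1 : Fin n → ℝ) j)
          = (a k j * (-Real.sin (θ k - θ j))) * (Pi.single i 1 : Fin n → ℝ) k
            - (a k j * (-Real.sin (θ k - θ j))) * (Pi.single i 1 : Fin n → ℝ) j := by
        intro k j; ring
      simp only [expand, Finset.sum_sub_distrib]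
      have e1 : ∑ k : Fin n, ∑ j : Fin n,
          (a k j * (-Real.sin (θ k - θ j))) * (Pi.single i 1 : Fin n → ℝ) k
          = ∑ j : Fin n, a i j * (-Real.sin (θ i - θ j)) := by
        rw [Finset.sum_comm]
        simp [Pi.single_apply, mul_ite, Finset.sum_ite_eq']
      have e2 : ∑ k : Fin n, ∑ j : Fin n,
          (a k j * (-Real.sin (θ k - θ j))) * (Pi.single i 1 : Fin n → ℝ) j
          = ∑ k : Fin n, a k i * (-Real.sin (θ k - θ i)) := by
        simp [Pi.single_apply, mul_ite, Finset.sum_ite_eq']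
      rw [e1, e2]
      have e3 : ∑ k : Fin n, a k i * (-Real.sin (θ k - θ i))
          = ∑ k : Fin n, a i k * Real.sin (θ i - θ k) := by
        apply Finset.sum_congr rfl
        intro k _
        rw [hsymm k i, ← Real.sin_neg, neg_sub]
      rw [e3]
      have e4 : ∑ j : Fin n, a i j * (-Real.sin (θ i - θ j))
          = -∑ j : Fin n, a i j * Real.sin (θ i - θ j) := by
        rw [← Finset.sum_neg_distrib]; apply Finset.sum_congr rfl; intros; ring
      rw [e4]; ring
    rw [h1] at hscal
    linarith
  -- order parameter identity
  have hre : r.re = ∑ j : Fin n, Real.cos (θ j) := by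
    rw [hr, Complex.re_sum]
    exact Finset.sum_congr rfl fun j _ => Complex.exp_ofReal_mul_I_re (θ j)
  have him : r.im = ∑ j : Fin n, Real.sin (θ j) := by
    rw [hr, Complex.im_sum]
    exact Finset.sum_congr rfl fun j _ => Complex.exp_ofReal_mul_I_im (θ j)
  have hre' : r.re = ‖r‖ * Real.cos θr := by
    conv_lhs => rw [hpolar]
    simp [Complex.exp_ofReal_mul_I_re, Complex.exp_ofReal_mul_I_im]
  have him' : r.im = ‖r‖ * Real.sin θr := by
    conv_lhs => rw [hpolar]
    simp [Complex.exp_ofReal_mul_I_re, Complex.exp_ofReal_mul_I_im]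
  have key : ‖r‖ * Real.sin (θ i - θr)
      = ∑ j : Fin n, Real.sin (θ i - θ j) := by
    have : ∑ j : Fin n, Real.sin (θ i - θ j)
        = Real.sin (θ i) * r.re - Real.cos (θ i) * r.im := by
      rw [hre, him, Finset.mul_sum, Finset.mul_sum, ← Finset.sum_sub_distrib]
      exact Finset.sum_congr rfl fun j _ => Real.sin_sub (θ i) (θ j)
    rw [this, hre', him', Real.sin_sub]
    ring
  -- split the sum
  have hsplit : ∑ j : Fin n, Real.sin (θ i - θ j)
      = ∑ j ∈ Finset.univ.erase i, (1 - a i j) * Real.sin (θ i - θ j) := by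
    have h1 : ∑ j : Fin n, Real.sin (θ i - θ j)
        = ∑ j : Fin n, a i j * Real.sin (θ i - θ j)
          + ∑ j : Fin n, (1 - a i j) * Real.sin (θ i - θ j) := by
      rw [← Finset.sum_add_distrib]
      exact Finset.sum_congr rfl fun j _ => by ring
    rw [h1, hzero, zero_add]
    rw [← Finset.sum_erase_add _ _ (Finset.mem_univ i)]
    simp [hdiag]
  have keyeq : ‖r‖ * Real.sin (θ i - θr)
      = ∑ j ∈ Finset.univ.erase i, (1 - a i j) * Real.sin (θ i - θ j) := by
    rw [key, hsplit]
  rw [← keyeq, abs_mul, abs_of_pos hrpos]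
  rw [one_div, inv_mul_cancel_left₀ (ne_of_gt hrpos)]
end

section
/- Let (a_{ij}) be the adjacency matrix of a connected simple graph on n ≥ 2 vertices and θ ∈ ℝⁿ a strict local maximizer of f(θ) = Σ_{i,j} a_{ij} cos(θᵢ − θⱼ). If there exists an angle θ_r with |sin(θᵢ − θ_r)| < 1/√2 for all i, then all θᵢ are equal modulo 2π. -/
open Real Finset

private lemma walk_prop {V : Type*} {G : SimpleGraph V} (P : V → Prop)
    (hP : ∀ x y, G.Adj x y → P x → P y) :
    ∀ {i j : V}, G.Walk i j → P i → P j := by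
  intro i j w
  induction w with
  | nil => exact id
  | cons h _ ih => exact fun hu => ih (hP _ _ h hu)

private lemma sum_neg_of {α : Type*} {s : Finset α} (f : α → ℝ)
    (h : ∀ i ∈ s, f i ≤ 0) {x : α} (hx : x ∈ s) (hfx : f x < 0) :
    ∑ i ∈ s, f i < 0 := by
  simpa using Finset.sum_lt_sum (g := fun _ => (0:ℝ)) h ⟨x, hx, hfx⟩

private lemma trig_aux1 (A t d x : ℝ) (hd : d = 0 ∨ d = 1 ∨ d = -1) :
    x * Real.cos (A + t * d) + x * Real.cos (A + -t * d) - 2 * (x * Real.cos A)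
      = 2 * (Real.cos t - 1) * (x * Real.cos A * d ^ 2) := by
  rcases hd with h | h | h <;> subst h <;>
    simp [Real.cos_add, Real.sin_neg, Real.cos_neg] <;> ring

private lemma trig_aux2 (A t d x : ℝ) (hd : d = 0 ∨ d = 1 ∨ d = -1) :
    x * Real.cos (A + t * d) - x * Real.cos A
      = (Real.cos t - 1) * (x * Real.cos A * d ^ 2) - Real.sin t * (x * Real.sin A * d) := by
  rcases hd with h | h | h <;> subst h <;>
    simp [Real.cos_add, Real.sin_neg, Real.cos_neg] <;> ring

set_option maxHeartbeats 2000000 in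
theorem stmt19 (n : ℕ) (hn : 2 ≤ n) (G : SimpleGraph (Fin n))
    [DecidableRel G.Adj] (hconn : G.Connected)
    (a : Fin n → Fin n → ℝ)
    (ha : ∀ i j, a i j = if G.Adj i j then 1 else 0)
    (θ : Fin n → ℝ)
    (hmax : IsLocalMax (fun φ : Fin n → ℝ =>
      ∑ i : Fin n, ∑ j : Fin n, a i j * Real.cos (φ i - φ j)) θ)
    (θr : ℝ) (hsin : ∀ i, |Real.sin (θ i - θr)| < 1 / Real.sqrt 2) :
    ∀ i j : Fin n, ∃ k : ℤ, θ i - θ j = 2 * Real.pi * k := by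
  set F : (Fin n → ℝ) → ℝ := fun φ : Fin n → ℝ =>
      ∑ i : Fin n, ∑ j : Fin n, a i j * Real.cos (φ i - φ j) with hFdef
  have sqrt2_pos : (0:ℝ) < Real.sqrt 2 := Real.sqrt_pos.2 (by norm_num)
  have hinv : (0:ℝ) < 1 / Real.sqrt 2 := by positivity
  have hhalf : ((1:ℝ) / Real.sqrt 2) ^ 2 = 1 / 2 := by
    rw [div_pow, one_pow, Real.sq_sqrt (by norm_num : (0:ℝ) ≤ 2)]
  have ha_nonneg : ∀ i j, 0 ≤ a i j := by
    intro i j; rw [ha]; split_ifs <;> norm_num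
  -- eventual inequality from local max
  have hev : ∀ v : Fin n → ℝ, ∃ ε > (0:ℝ), ∀ t : ℝ, |t| < ε → F (θ + t • v) ≤ F θ := by
    intro v
    have hc : Continuous fun t : ℝ => θ + t • v := by fun_prop
    have ht : Filter.Tendsto (fun t : ℝ => θ + t • v) (nhds 0) (nhds θ) :=
      hc.tendsto' 0 θ (by simp)
    have h2 := ht.eventually hmax
    rw [Metric.eventually_nhds_iff] at h2
    obtain ⟨ε, hε, h3⟩ := h2
    exact ⟨ε, hε, fun t htl => h3 (by simpa [Real.dist_eq] using htl)⟩
  -- expansion of F along a direction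
  have hexp : ∀ (v : Fin n → ℝ) (t : ℝ), F (θ + t • v)
      = ∑ i : Fin n, ∑ j : Fin n, a i j * Real.cos ((θ i - θ j) + t * (v i - v j)) := by
    intro v t
    simp only [hFdef]
    refine Finset.sum_congr rfl fun i _ => Finset.sum_congr rfl fun j _ => ?_
    simp only [Pi.add_apply, Pi.smul_apply, smul_eq_mul]
    congr 1
    ring
  have hFθ : F θ = ∑ i : Fin n, ∑ j : Fin n, a i j * Real.cos (θ i - θ j) := by
    simp only [hFdef]
  -- |cos (θ i - θr)| > 1/√2
  have habs : ∀ i, 1 / Real.sqrt 2 < |Real.cos (θ i - θr)| := by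
    intro i
    have h1 : ((1:ℝ) / Real.sqrt 2) ^ 2 < |Real.cos (θ i - θr)| ^ 2 := by
      have hpy := Real.sin_sq_add_cos_sq (θ i - θr)
      have h2 : (Real.sin (θ i - θr)) ^ 2 < 1 / 2 := by
        have h3 := hsin i
        have h4 : |Real.sin (θ i - θr)| ^ 2 < (1 / Real.sqrt 2) ^ 2 :=
          pow_lt_pow_left₀ h3 (abs_nonneg _) (by norm_num)
        rw [sq_abs] at h4; linarith [hhalf]
      rw [sq_abs, hhalf]; linarith
    exact lt_of_pow_lt_pow_left₀ 2 (abs_nonneg _) h1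
  have hcne : ∀ i, Real.cos (θ i - θr) ≠ 0 := by
    intro i h
    have := habs i; rw [h, abs_zero] at this; linarith
  -- cross-edge cosine negativity
  have hcross : ∀ p q : Fin n, 0 < Real.cos (θ p - θr) → Real.cos (θ q - θr) < 0 →
      Real.cos (θ p - θ q) < 0 := by
    intro p q hp hq
    have e : Real.cos (θ p - θ q)
        = Real.cos (θ p - θr) * Real.cos (θ q - θr)
          + Real.sin (θ p - θr) * Real.sin (θ q - θr) := by
      rw [show θ p - θ q = (θ p - θr) - (θ q - θr) by ring, Real.cos_sub]
    rw [e]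
    have hp' : 1 / Real.sqrt 2 < Real.cos (θ p - θr) := by
      have := habs p; rwa [abs_of_pos hp] at this
    have hq' : Real.cos (θ q - θr) < -(1 / Real.sqrt 2) := by
      have := habs q; rw [abs_of_neg hq] at this; linarith
    have hx : 0 < Real.cos (θ p - θr) - 1 / Real.sqrt 2 := by linarith
    have hy : 0 < -(1 / Real.sqrt 2) - Real.cos (θ q - θr) := by linarith
    have h2 : Real.sin (θ p - θr) * Real.sin (θ q - θr) < 1 / 2 := by
      calc Real.sin (θ p - θr) * Real.sin (θ q - θr)
          ≤ |Real.sin (θ p - θr) * Real.sin (θ q - θr)| := le_abs_self _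
        _ = |Real.sin (θ p - θr)| * |Real.sin (θ q - θr)| := abs_mul _ _
        _ < (1 / Real.sqrt 2) * (1 / Real.sqrt 2) :=
            mul_lt_mul'' (hsin p) (hsin q) (abs_nonneg _) (abs_nonneg _)
        _ = 1 / 2 := by rw [← sq]; exact hhalf
    nlinarith [mul_pos hx hy, mul_pos hinv hx, mul_pos hinv hy, hhalf]
  -- STEP A: all cosines have the same sign
  have hsign : (∀ i, 0 < Real.cos (θ i - θr)) ∨ (∀ i, Real.cos (θ i - θr) < 0) := by
    by_contra hcon
    push_neg at hcon
    obtain ⟨⟨i1, hi1⟩, ⟨i2, hi2⟩⟩ := hcon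
    have hi1' : Real.cos (θ i1 - θr) < 0 := lt_of_le_of_ne hi1 (hcne i1)
    have hi2' : 0 < Real.cos (θ i2 - θr) := lt_of_le_of_ne hi2 (Ne.symm (hcne i2))
    have hedge : ∃ x y, G.Adj x y ∧ 0 < Real.cos (θ x - θr) ∧ Real.cos (θ y - θr) < 0 := by
      by_contra hne
      push_neg at hne
      have hcl : ∀ x y, G.Adj x y → 0 < Real.cos (θ x - θr) → 0 < Real.cos (θ y - θr) := by
        intro x y hxy hx
        exact lt_of_le_of_ne (hne x y hxy hx) (Ne.symm (hcne y))
      obtain ⟨w⟩ := hconn i2 i1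
      exact absurd (walk_prop _ hcl w hi2') (by linarith)
    obtain ⟨x, y, hadj, hx, hy⟩ := hedge
    set N : Fin n → ℝ := fun i => if 0 < Real.cos (θ i - θr) then 0 else 1 with hN
    have hNd : ∀ i j : Fin n, N i - N j = 0 ∨ N i - N j = 1 ∨ N i - N j = -1 := by
      intro i j; simp only [hN]; split_ifs <;> norm_num
    obtain ⟨ε, hε, hball⟩ := hev N
    set u := min (ε / 2) 1 with hu
    have hu0 : 0 < u := lt_min (by linarith) one_pos
    have hu1 : u ≤ 1 := min_le_right _ _
    have huε : |u| < ε := by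
      rw [abs_of_pos hu0]
      calc u ≤ ε / 2 := min_le_left _ _
        _ < ε := by linarith
    have h1 := hball u huε
    have h2 := hball (-u) (by rwa [abs_neg])
    have hid : F (θ + u • N) + F (θ + (-u) • N) - 2 * F θ
        = 2 * (Real.cos u - 1)
          * ∑ i : Fin n, ∑ j : Fin n, a i j * Real.cos (θ i - θ j) * (N i - N j) ^ 2 := by
      rw [hexp N u, hexp N (-u), hFθ]
      simp only [Finset.mul_sum, ← Finset.sum_add_distrib, ← Finset.sum_sub_distrib]
      refine Finset.sum_congr rfl fun i _ => Finset.sum_congr rfl fun j _ => ?_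
      exact trig_aux1 (θ i - θ j) u (N i - N j) (a i j) (hNd i j)
    have hterm : ∀ i j : Fin n, a i j * Real.cos (θ i - θ j) * (N i - N j) ^ 2 ≤ 0 := by
      intro i j
      rcases hNd i j with h | h | h
      · rw [h]; simp
      all_goals {
        have hcneg : Real.cos (θ i - θ j) < 0 := by
          by_cases hi : 0 < Real.cos (θ i - θr) <;> by_cases hj : 0 < Real.cos (θ j - θr)
          · simp only [hN, if_pos hi, if_pos hj, sub_self] at h <;> norm_num at h
          · exact hcross i j hi (lt_of_le_of_ne (not_lt.mp hj) (hcne j))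
          · have := hcross j i hj (lt_of_le_of_ne (not_lt.mp hi) (hcne i))
            rwa [show θ j - θ i = -(θ i - θ j) by ring, Real.cos_neg] at this
          · simp only [hN, if_neg hi, if_neg hj, sub_self] at h <;> norm_num at h
        rw [h, ha]
        split_ifs with hadj2
        · norm_num; linarith
        · norm_num
      }
    have hK : (∑ i : Fin n, ∑ j : Fin n, a i j * Real.cos (θ i - θ j) * (N i - N j) ^ 2) < 0 := by
      refine sum_neg_of _ (fun i _ => Finset.sum_nonpos fun j _ => hterm i j)
        (Finset.mem_univ x) ?_
      refine sum_neg_of _ (fun j _ => hterm x j) (Finset.mem_univ y) ?_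
      have hNx : N x = 0 := by simp only [hN, if_pos hx]
      have hNy : N y = 1 := by simp only [hN]; rw [if_neg (by linarith)]
      rw [hNx, hNy, ha, if_pos hadj]
      norm_num
      exact hcross x y hx hy
    have hcos_u : Real.cos u < 1 := by
      have hne0 : u ≠ 0 := ne_of_gt hu0
      have h4 := Real.cos_eq_one_iff_of_lt_of_lt
        (show -(2 * π) < u by linarith [Real.pi_gt_three])
        (show u < 2 * π by linarith [Real.pi_gt_three])
      rcases lt_or_eq_of_le (Real.cos_le_one u) with h | h
      · exact h
      · exact absurd (h4.mp h) hne0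
    have hsum : F (θ + u • N) + F (θ + (-u) • N) - 2 * F θ ≤ 0 := by linarith
    rw [hid] at hsum
    nlinarith [mul_pos (show (0:ℝ) < 1 - Real.cos u by linarith)
      (show (0:ℝ) < -(∑ i : Fin n, ∑ j : Fin n,
        a i j * Real.cos (θ i - θ j) * (N i - N j) ^ 2) by linarith)]
  -- normalize: get θr' with all cosines positive
  obtain ⟨θr', hc', hs'⟩ : ∃ θr', (∀ i, 0 < Real.cos (θ i - θr'))
      ∧ (∀ i, |Real.sin (θ i - θr')| < 1 / Real.sqrt 2) := by
    rcases hsign with h | h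
    · exact ⟨θr, h, hsin⟩
    · refine ⟨θr + π, fun i => ?_, fun i => ?_⟩
      · rw [show θ i - (θr + π) = (θ i - θr) - π by ring, Real.cos_sub_pi]
        linarith [h i]
      · rw [show θ i - (θr + π) = (θ i - θr) - π by ring, Real.sin_sub_pi, abs_neg]
        exact hsin i
  have hs1 : ∀ i, -1 ≤ Real.sin (θ i - θr') ∧ Real.sin (θ i - θr') ≤ 1 :=
    fun i => ⟨Real.neg_one_le_sin _, Real.sin_le_one _⟩
  set φ : Fin n → ℝ := fun i => Real.arcsin (Real.sin (θ i - θr')) with hφ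
  have hφsin : ∀ i, Real.sin (φ i) = Real.sin (θ i - θr') := fun i =>
    Real.sin_arcsin (hs1 i).1 (hs1 i).2
  have hφcos : ∀ i, Real.cos (φ i) = Real.cos (θ i - θr') := by
    intro i
    have h1 : Real.cos (φ i) = Real.sqrt (1 - Real.sin (θ i - θr') ^ 2) := Real.cos_arcsin _
    have h2 : Real.cos (θ i - θr') = Real.sqrt (1 - Real.sin (θ i - θr') ^ 2) := by
      rw [show 1 - Real.sin (θ i - θr') ^ 2 = Real.cos (θ i - θr') ^ 2 by
        nlinarith [Real.sin_sq_add_cos_sq (θ i - θr')]]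
      rw [Real.sqrt_sq (le_of_lt (hc' i))]
    rw [h1, h2]
  have hk : ∀ i, ∃ m : ℤ, θ i - θr' = φ i + 2 * π * m := by
    intro i
    have h0 := Real.Angle.cos_sin_inj (θ := θ i - θr') (ψ := φ i)
      (by rw [hφcos i]) (by rw [hφsin i])
    rw [Real.Angle.angle_eq_iff_two_pi_dvd_sub] at h0
    obtain ⟨m, hm⟩ := h0
    exact ⟨m, by linarith⟩
  choose k hkk using hk
  have hφlt : ∀ i, -(π / 2) < φ i ∧ φ i < π / 2 := by
    intro i
    have h1 : φ i ≤ π / 2 := Real.arcsin_le_pi_div_two _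
    have h2 : -(π / 2) ≤ φ i := Real.neg_pi_div_two_le_arcsin _
    have h3 : 0 < Real.cos (φ i) := by rw [hφcos]; exact hc' i
    constructor
    · rcases lt_or_eq_of_le h2 with h | h
      · exact h
      · rw [← h, Real.cos_neg, Real.cos_pi_div_two] at h3; linarith
    · rcases lt_or_eq_of_le h1 with h | h
      · exact h
      · rw [h, Real.cos_pi_div_two] at h3; linarith
  have hsinφ : ∀ p q : Fin n, Real.sin (θ p - θ q) = Real.sin (φ p - φ q) := by
    intro p q
    have he : θ p - θ q = (φ p - φ q) + ((k p - k q : ℤ) : ℝ) * (2 * π) := by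
      have e1 := hkk p; have e2 := hkk q; push_cast; linarith
    rw [he, Real.sin_add_int_mul_two_pi]
  -- STEP B: at a φ-maximal vertex, adjacent vertices have equal φ
  have hstep : ∀ i0 j0 : Fin n, G.Adj i0 j0 → (∀ l, φ l ≤ φ i0) → φ j0 = φ i0 := by
    intro i0 j0 hadj hmaxφ
    set v : Fin n → ℝ := fun l => if l = i0 then 1 else 0 with hv
    have hvd : ∀ i j : Fin n, v i - v j = 0 ∨ v i - v j = 1 ∨ v i - v j = -1 := by
      intro i j; simp only [hv]; split_ifs <;> norm_num
    have hid2 : ∀ t : ℝ, F (θ + t • v) - F θ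
        = (Real.cos t - 1) * (∑ i : Fin n, ∑ j : Fin n,
            a i j * Real.cos (θ i - θ j) * (v i - v j) ^ 2)
          - Real.sin t * (∑ i : Fin n, ∑ j : Fin n,
            a i j * Real.sin (θ i - θ j) * (v i - v j)) := by
      intro t
      rw [hexp v t, hFθ]
      simp only [Finset.mul_sum, ← Finset.sum_sub_distrib]
      refine Finset.sum_congr rfl fun i _ => Finset.sum_congr rfl fun j _ => ?_
      exact trig_aux2 (θ i - θ j) t (v i - v j) (a i j) (hvd i j)
    set C := ∑ i : Fin n, ∑ j : Fin n, a i j * Real.cos (θ i - θ j) * (v i - v j) ^ 2 with hC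
    set D := ∑ i : Fin n, ∑ j : Fin n, a i j * Real.sin (θ i - θ j) * (v i - v j) with hD
    -- each term of D is nonnegative
    have hterm : ∀ i j : Fin n, 0 ≤ a i j * Real.sin (θ i - θ j) * (v i - v j) := by
      intro i j
      rcases hvd i j with h | h | h
      · rw [h]; simp
      · -- v i = 1, v j = 0 : i = i0, j ≠ i0
        rw [h, mul_one]
        refine mul_nonneg (ha_nonneg i j) ?_
        rw [hsinφ i j]
        have hi : i = i0 := by
          by_contra hii
          simp only [hv, if_neg hii] at h
          split_ifs at h <;> norm_num at h
        refine Real.sin_nonneg_of_nonneg_of_le_pi ?_ ?_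
        · rw [hi]; linarith [hmaxφ j]
        · linarith [(hφlt i).1, (hφlt i).2, (hφlt j).1, (hφlt j).2, Real.pi_pos]
      · -- v i = 0, v j = 1 : j = i0, i ≠ i0
        rw [h]
        have hj : j = i0 := by
          by_contra hjj
          simp only [hv, if_neg hjj] at h
          split_ifs at h <;> norm_num at h
        have hsn : Real.sin (θ i - θ j) ≤ 0 := by
          rw [hsinφ i j]
          rw [show φ i - φ j = -(φ j - φ i) by ring, Real.sin_neg, neg_nonpos]
          refine Real.sin_nonneg_of_nonneg_of_le_pi ?_ ?_
          · rw [hj]; linarith [hmaxφ i]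
          · linarith [(hφlt i).1, (hφlt i).2, (hφlt j).1, (hφlt j).2, Real.pi_pos]
        nlinarith [ha_nonneg i j]
    -- D ≤ 0 using the local max property
    have hD0 : D ≤ 0 := by
      by_contra hpos
      push_neg at hpos
      obtain ⟨ε, hε, hball⟩ := hev v
      set u := min (min (ε / 2) (π / 2)) (D / (2 * (|C| + 1))) with hu
      have hC1 : (0:ℝ) < 2 * (|C| + 1) := by positivity
      have hu0 : 0 < u :=
        lt_min (lt_min (by linarith) (by linarith [Real.pi_pos])) (div_pos hpos hC1)
      have huπ : u ≤ π / 2 := le_trans (min_le_left _ _) (min_le_right _ _)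
      have huD : u * (2 * (|C| + 1)) ≤ D := by
        have := min_le_right (min (ε / 2) (π / 2)) (D / (2 * (|C| + 1)))
        rwa [← hu, le_div_iff₀ hC1] at this
      have huε : |(-u)| < ε := by
        rw [abs_neg, abs_of_pos hu0]
        have : u ≤ ε / 2 := le_trans (min_le_left _ _) (min_le_left _ _)
        linarith
      have h1 := hball (-u) huε
      have h2 := hid2 (-u)
      rw [Real.cos_neg, Real.sin_neg] at h2
      have h3 : (Real.cos u - 1) * C + Real.sin u * D ≤ 0 := by
        have : (Real.cos u - 1) * C + Real.sin u * D = F (θ + (-u) • v) - F θ := by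
          rw [h2]; ring
        rw [this]; linarith
      have hsin_u : u / 2 ≤ Real.sin u := by
        have hj := Real.mul_le_sin (le_of_lt hu0) huπ
        have hq : (1:ℝ)/2 ≤ 2/π := by
          rw [div_le_div_iff₀ (by norm_num) Real.pi_pos]
          linarith [Real.pi_le_four]
        have := mul_le_mul_of_nonneg_right hq (le_of_lt hu0)
        linarith
      have hcos_u : 1 - Real.cos u ≤ u ^ 2 / 2 := by
        linarith [Real.one_sub_sq_div_two_le_cos (x := u)]
      have hcles : (Real.cos u - 1) * C ≥ -(u ^ 2 / 2 * (|C| + 1)) := by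
        have hb1 : 1 - Real.cos u ≥ 0 := by linarith [Real.cos_le_one u]
        nlinarith [le_abs_self C, neg_abs_le C]
      have h4 : Real.sin u * D ≤ u ^ 2 / 2 * (|C| + 1) := by linarith
      have h5 : u / 2 * D ≤ Real.sin u * D :=
        mul_le_mul_of_nonneg_right hsin_u (le_of_lt hpos)
      -- u/2 * D ≤ u^2/2 (|C|+1) and u * 2(|C|+1) ≤ D give contradiction
      nlinarith [mul_pos hu0 hpos, mul_le_mul_of_nonneg_left huD (le_of_lt hu0)]
    -- all terms of D vanish
    have hzero : ∀ i ∈ (univ : Finset (Fin n)), ∀ j ∈ (univ : Finset (Fin n)),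
        a i j * Real.sin (θ i - θ j) * (v i - v j) = 0 := by
      have htot : D = 0 := le_antisymm hD0
        (Finset.sum_nonneg fun i _ => Finset.sum_nonneg fun j _ => hterm i j)
      intro i hi j hj
      have hrow := (Finset.sum_eq_zero_iff_of_nonneg
        (fun i _ => Finset.sum_nonneg fun j _ => hterm i j)).mp htot i hi
      exact (Finset.sum_eq_zero_iff_of_nonneg (fun j _ => hterm i j)).mp hrow j hj
    have hne0 : j0 ≠ i0 := fun h => G.irrefl (h ▸ hadj)
    have hv1 : v i0 - v j0 = 1 := by simp only [hv, if_pos rfl, if_neg hne0]; norm_num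
    have hz := hzero i0 (mem_univ _) j0 (mem_univ _)
    rw [hv1, mul_one, ha, if_pos hadj, one_mul] at hz
    rw [hsinφ i0 j0] at hz
    have hrange : 0 ≤ φ i0 - φ j0 := by linarith [hmaxφ j0]
    have hlt : φ i0 - φ j0 < π := by
      linarith [(hφlt i0).2, (hφlt j0).1, Real.pi_pos]
    by_contra hne2
    have hpos2 : 0 < φ i0 - φ j0 :=
      lt_of_le_of_ne hrange (fun h => hne2 (by linarith))
    exact absurd hz (ne_of_gt (Real.sin_pos_of_pos_of_lt_pi hpos2 hlt))
  -- propagate from a global argmax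
  obtain ⟨i0, -, hmax0⟩ := Finset.exists_max_image (univ : Finset (Fin n)) φ
    ⟨⟨0, by omega⟩, mem_univ _⟩
  have hMall : ∀ j, φ j = φ i0 := by
    have hcl : ∀ x y, G.Adj x y → φ x = φ i0 → φ y = φ i0 := by
      intro x y hxy hxm
      have := hstep x y hxy (fun l => by rw [hxm]; exact hmax0 l (mem_univ l))
      rw [this, hxm]
    intro j
    obtain ⟨w⟩ := hconn i0 j
    exact walk_prop _ hcl w rfl
  -- conclusion
  intro i j
  refine ⟨k i - k j, ?_⟩
  have e1 := hkk i
  have e2 := hkk j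
  have e3 : φ i = φ j := by rw [hMall i, hMall j]
  push_cast
  linarith
end
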